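/- Let ρ > 0, S, r, T be smooth fields and u, B smooth vector fields on ℝ³ × ℝ satisfying: the continuity equation ∂ρ/∂t + ∇·(ρu) = 0, entropy advection ∂S/∂t + u·∇S = 0, dr/dt := ∂r/∂t + u·∇r = −T, ∇·B = 0, Faraday's law ∂B/∂t = ∇×(u×B), and the momentum equation ∂u/∂t − u×(∇×u) + ∇(h + Φ + ½|u|²) − T∇S − ((∇×B)×B)/(μ₀ρ) = 0 with smooth h, Φ. Then the generalized cross-helicity density h_c = B·(u + r∇S) satisfies ∂h_c/∂t + ∇·[h_c u + B(h + Φ − ½|u|²)] = 0. -/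

import Mathlib

open scoped BigOperators
open MeasureTheory

noncomputable section

abbrev V3 : Type := Fin 3 → ℝ

/-- Partial derivative of a scalar field in coordinate direction `i`. -/
noncomputable def pd (f : V3 → ℝ) (i : Fin 3) (x : V3) : ℝ :=
  fderiv ℝ f x (Pi.single i 1)

/-- Gradient of a scalar field on ℝ³. -/
noncomputable def grad3 (f : V3 → ℝ) (x : V3) : V3 := fun i => pd f i x

/-- Divergence of a vector field on ℝ³. -/
noncomputable def div3 (F : V3 → V3) (x : V3) : ℝ := ∑ i, pd (fun y => F y i) i x

/-- Curl of a vector field on ℝ³. -/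
noncomputable def curl3 (F : V3 → V3) (x : V3) : V3 :=
  ![pd (fun y => F y 2) 1 x - pd (fun y => F y 1) 2 x,
    pd (fun y => F y 0) 2 x - pd (fun y => F y 2) 0 x,
    pd (fun y => F y 1) 0 x - pd (fun y => F y 0) 1 x]

/-- Cross product in ℝ³. -/
def cross3 (a b : V3) : V3 :=
  ![a 1 * b 2 - a 2 * b 1, a 2 * b 0 - a 0 * b 2, a 0 * b 1 - a 1 * b 0]

/-- Dot product in ℝ³. -/
def dot3 (a b : V3) : ℝ := ∑ i, a i * b i

/-- Advective derivative (F·∇)G of a vector field G along F. -/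
noncomputable def advD (F G : V3 → V3) (x : V3) : V3 :=
  fun j => ∑ i, F x i * pd (fun y => G y j) i x

/-- Time partial derivative of a time-dependent vector field. -/
noncomputable def dtV (F : ℝ → V3 → V3) (t : ℝ) (x : V3) : V3 :=
  fun i => deriv (fun s => F s x i) t

/-- Time partial derivative of a time-dependent scalar field. -/
noncomputable def dtS (f : ℝ → V3 → ℝ) (t : ℝ) (x : V3) : ℝ :=
  deriv (fun s => f s x) t

/-- Smooth time-dependent vector field. -/
def SmoothTV (F : ℝ → V3 → V3) : Prop := ContDiff ℝ (⊤ : ℕ∞) (Function.uncurry F)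

/-- Smooth time-dependent scalar field. -/
def SmoothTS (f : ℝ → V3 → ℝ) : Prop := ContDiff ℝ (⊤ : ℕ∞) (Function.uncurry f)

/-- Smooth (static) vector field. -/
def SmoothV (F : V3 → V3) : Prop := ContDiff ℝ (⊤ : ℕ∞) F

/-- Smooth (static) scalar field. -/
def SmoothS (f : V3 → ℝ) : Prop := ContDiff ℝ (⊤ : ℕ∞) f

/-!
Write `h_c = B·u + r q` with `q = B·∇S`. Faraday's law and `∇·B = 0` make `q` a conserved
density, `∂ₜq + ∇·(q u) = 0`: indeed `∂ₜ∇S = -∇(u·∇S)`, while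
`(∇×(u×B))·∇S = ∇·((u×B)×∇S)` because `∇×∇S = 0`, and `(u×B)×∇S = (u·∇S) B - q u`.
Hence `∂ₜ(r q) + ∇·(r q u) = q dr/dt = -T q`. Dotting the momentum equation with `B` kills the
Lorentz force and, via `u·∇×(u×B) = ∇·((u×B)×u) + (u×B)·(∇×u)` and `B·∇e = ∇·(e B)`, gives
`∂ₜ(B·u) + ∇·[(B·u) u + (h + Φ - ½|u|²) B] = T q`. The two balances add up to the claim.
-/

open scoped ContDiff Matrix

theorem dot3_eq_dotProduct (a b : V3) : dot3 a b = a ⬝ᵥ b := rfl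

theorem cross3_eq_crossProduct (a b : V3) : cross3 a b = a ⨯₃ b := rfl

section Regularity

variable {E : Type*} [NormedAddCommGroup E] [NormedSpace ℝ E] {n : WithTop ℕ∞} {F G : E → V3}

theorem ContDiff.dot3 (hF : ContDiff ℝ n F) (hG : ContDiff ℝ n G) :
    ContDiff ℝ n (fun y => dot3 (F y) (G y)) := by
  unfold _root_.dot3
  fun_prop

@[fun_prop]
theorem DifferentiableAt.dot3 {x : E} (hF : DifferentiableAt ℝ F x)
    (hG : DifferentiableAt ℝ G x) : DifferentiableAt ℝ (fun y => dot3 (F y) (G y)) x := by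
  unfold _root_.dot3
  fun_prop

@[fun_prop]
theorem DifferentiableAt.cross3 {x : E} (hF : DifferentiableAt ℝ F x)
    (hG : DifferentiableAt ℝ G x) : DifferentiableAt ℝ (fun y => cross3 (F y) (G y)) x := by
  refine differentiableAt_pi.2 fun i => ?_
  fin_cases i <;> simp [_root_.cross3] <;> fun_prop

end Regularity

section SpatialCalculus

variable {f g : V3 → ℝ} {F G : V3 → V3} {x : V3}

theorem pd_add (hf : DifferentiableAt ℝ f x) (hg : DifferentiableAt ℝ g x) (i : Fin 3) :
    pd (fun y => f y + g y) i x = pd f i x + pd g i x := by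
  simp [pd, fderiv_fun_add hf hg]

theorem pd_sub (hf : DifferentiableAt ℝ f x) (hg : DifferentiableAt ℝ g x) (i : Fin 3) :
    pd (fun y => f y - g y) i x = pd f i x - pd g i x := by
  simp [pd, fderiv_fun_sub hf hg]

theorem pd_mul (hf : DifferentiableAt ℝ f x) (hg : DifferentiableAt ℝ g x) (i : Fin 3) :
    pd (fun y => f y * g y) i x = pd f i x * g x + f x * pd g i x := by
  simp [pd, fderiv_fun_mul hf hg]
  ring

theorem pd_neg (i : Fin 3) : pd (fun y => -f y) i x = -pd f i x := by
  simp [pd, fderiv_fun_neg]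

theorem fderiv_fderiv_apply_comm {E F : Type*} [NormedAddCommGroup E] [NormedSpace ℝ E]
    [NormedAddCommGroup F] [NormedSpace ℝ F] {f : E → F} {x : E}
    (hf : ContDiffAt ℝ 2 f x) (v w : E) :
    fderiv ℝ (fun y => fderiv ℝ f y v) x w = fderiv ℝ (fun y => fderiv ℝ f y w) x v := by
  have hdf : DifferentiableAt ℝ (fderiv ℝ f) x :=
    (hf.fderiv_right (m := 1) (by norm_num)).differentiableAt (by norm_num)
  simp only [fderiv_clm_apply hdf (differentiableAt_const _), fderiv_fun_const]
  simpa using (hf.isSymmSndFDerivAt (by simp)).eq w v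

theorem pd_pd_comm (hf : ContDiffAt ℝ 2 f x) (i j : Fin 3) :
    pd (pd f i) j x = pd (pd f j) i x :=
  fderiv_fderiv_apply_comm hf _ _

theorem curl3_grad3 (hf : ContDiffAt ℝ 2 f x) : curl3 (grad3 f) x = 0 := by
  ext i
  fin_cases i <;> simp [curl3, grad3, pd_pd_comm hf 1 2, pd_pd_comm hf 0 2, pd_pd_comm hf 0 1]

theorem div3_add (hF : DifferentiableAt ℝ F x) (hG : DifferentiableAt ℝ G x) :
    div3 (fun y => F y + G y) x = div3 F x + div3 G x := by
  simp only [div3, Pi.add_apply, ← Finset.sum_add_distrib]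
  exact Finset.sum_congr rfl fun i _ =>
    pd_add (differentiableAt_pi.1 hF i) (differentiableAt_pi.1 hG i) i

theorem div3_sub (hF : DifferentiableAt ℝ F x) (hG : DifferentiableAt ℝ G x) :
    div3 (fun y => F y - G y) x = div3 F x - div3 G x := by
  simp only [div3, Pi.sub_apply, ← Finset.sum_sub_distrib]
  exact Finset.sum_congr rfl fun i _ =>
    pd_sub (differentiableAt_pi.1 hF i) (differentiableAt_pi.1 hG i) i

theorem div3_smul (hf : DifferentiableAt ℝ f x) (hF : DifferentiableAt ℝ F x) :
    div3 (fun y => f y • F y) x = dot3 (F x) (grad3 f x) + f x * div3 F x := by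
  simp only [div3, dot3, grad3, Pi.smul_apply, smul_eq_mul, Finset.mul_sum,
    ← Finset.sum_add_distrib]
  refine Finset.sum_congr rfl fun i _ => ?_
  rw [pd_mul hf (differentiableAt_pi.1 hF i)]
  ring

theorem div3_cross3 (hF : DifferentiableAt ℝ F x) (hG : DifferentiableAt ℝ G x) :
    div3 (fun y => cross3 (F y) (G y)) x = dot3 (G x) (curl3 F x) - dot3 (F x) (curl3 G x) := by
  have hF' := differentiableAt_pi.1 hF
  have hG' := differentiableAt_pi.1 hG
  simp only [div3, curl3, cross3, dot3, Fin.sum_univ_three, Matrix.cons_val_zero,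
    Matrix.cons_val_one, Matrix.cons_val_two, Matrix.head_cons, Matrix.tail_cons]
  rw [pd_sub ((hF' 1).fun_mul (hG' 2)) ((hF' 2).fun_mul (hG' 1)),
    pd_sub ((hF' 2).fun_mul (hG' 0)) ((hF' 0).fun_mul (hG' 2)),
    pd_sub ((hF' 0).fun_mul (hG' 1)) ((hF' 1).fun_mul (hG' 0))]
  simp only [pd_mul (hF' _) (hG' _)]
  ring

end SpatialCalculus

section Slices

variable {E G : Type*} [NormedAddCommGroup E] [NormedSpace ℝ E]
  [NormedAddCommGroup G] [NormedSpace ℝ G] {φ : ℝ × E → G}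

theorem fderiv_prodMk_right_apply {s : ℝ} {x : E} (hφ : DifferentiableAt ℝ φ (s, x)) (v : E) :
    fderiv ℝ (fun y => φ (s, y)) x v = fderiv ℝ φ (s, x) (0, v) := by
  have h : HasFDerivAt (fun y => φ (s, y)) _ x :=
    hφ.hasFDerivAt.comp x (hasFDerivAt_prodMk_right s x)
  simp [h.fderiv]

theorem deriv_prodMk_left {t : ℝ} {y : E} (hφ : DifferentiableAt ℝ φ (t, y)) :
    deriv (fun s => φ (s, y)) t = fderiv ℝ φ (t, y) (1, 0) :=
  (hφ.hasFDerivAt.comp_hasDerivAt t ((hasDerivAt_id t).prodMk (hasDerivAt_const t y))).deriv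

theorem deriv_fderiv_comm (hφ : ContDiff ℝ 2 φ) (t : ℝ) (x v : E) :
    deriv (fun s => fderiv ℝ (fun y => φ (s, y)) x v) t
      = fderiv ℝ (fun y => deriv (fun s => φ (s, y)) t) x v := by
  have hdφ : Differentiable ℝ φ := hφ.differentiable (by norm_num)
  have hdφ' : ∀ w, Differentiable ℝ (fun p => fderiv ℝ φ p w) := fun w =>
    ((hφ.fderiv_right (m := 1) (by norm_num)).clm_apply contDiff_const).differentiable
      (by norm_num)
  simp only [fderiv_prodMk_right_apply (hdφ _), deriv_prodMk_left (hdφ _)]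
  rw [deriv_prodMk_left (hdφ' _ _), fderiv_prodMk_right_apply (hdφ' _ _)]
  exact fderiv_fderiv_apply_comm hφ.contDiffAt _ _

end Slices

section TimeDependent

variable {f g : ℝ → V3 → ℝ} {F G : ℝ → V3 → V3}

theorem SmoothTS.contDiff_apply (hf : SmoothTS f) (t : ℝ) : ContDiff ℝ ∞ (f t) :=
  hf.comp (contDiff_const.prodMk contDiff_id)

theorem SmoothTS.differentiable_apply (hf : SmoothTS f) (t : ℝ) : Differentiable ℝ (f t) :=
  (hf.contDiff_apply t).differentiable (by simp)

theorem SmoothTS.differentiable_time (hf : SmoothTS f) (x : V3) :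
    Differentiable ℝ (fun s => f s x) :=
  (hf.comp (contDiff_id.prodMk contDiff_const)).differentiable (by simp)

theorem SmoothTS.mul (hf : SmoothTS f) (hg : SmoothTS g) :
    SmoothTS (fun s y => f s y * g s y) :=
  ContDiff.mul hf hg

theorem SmoothTV.contDiff_apply (hF : SmoothTV F) (t : ℝ) : ContDiff ℝ ∞ (F t) :=
  hF.comp (contDiff_const.prodMk contDiff_id)

theorem SmoothTV.differentiable_apply (hF : SmoothTV F) (t : ℝ) : Differentiable ℝ (F t) :=
  (hF.contDiff_apply t).differentiable (by simp)

theorem SmoothTV.differentiable_time (hF : SmoothTV F) (x : V3) (i : Fin 3) :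
    Differentiable ℝ (fun s => F s x i) :=
  ((contDiff_pi.1 hF i).comp (contDiff_id.prodMk contDiff_const)).differentiable (by simp)

theorem SmoothTV.dot3 (hF : SmoothTV F) (hG : SmoothTV G) :
    SmoothTS (fun s y => dot3 (F s y) (G s y)) :=
  ContDiff.dot3 hF hG

theorem SmoothTS.grad3 (hf : SmoothTS f) : SmoothTV (fun s => grad3 (f s)) := by
  have hdf : Differentiable ℝ (Function.uncurry f) := hf.differentiable (by simp)
  refine contDiff_pi.2 fun i => ?_
  have h : (fun p : ℝ × V3 => _root_.grad3 (f p.1) p.2 i)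
      = fun p => fderiv ℝ (Function.uncurry f) p (0, Pi.single i 1) := by
    funext p
    exact fderiv_prodMk_right_apply (φ := Function.uncurry f) (hdf _) _
  simpa [Function.uncurry, h] using (hf.fderiv_right (m := ∞) (by simp)).clm_apply contDiff_const

theorem dtS_add {t : ℝ} {x : V3} (hf : DifferentiableAt ℝ (fun s => f s x) t)
    (hg : DifferentiableAt ℝ (fun s => g s x) t) :
    dtS (fun s y => f s y + g s y) t x = dtS f t x + dtS g t x :=
  deriv_fun_add hf hg

theorem dtS_mul {t : ℝ} {x : V3} (hf : DifferentiableAt ℝ (fun s => f s x) t)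
    (hg : DifferentiableAt ℝ (fun s => g s x) t) :
    dtS (fun s y => f s y * g s y) t x = dtS f t x * g t x + f t x * dtS g t x :=
  deriv_fun_mul hf hg

theorem dtS_dot3 {t : ℝ} {x : V3} (hF : ∀ i, DifferentiableAt ℝ (fun s => F s x i) t)
    (hG : ∀ i, DifferentiableAt ℝ (fun s => G s x i) t) :
    dtS (fun s y => dot3 (F s y) (G s y)) t x
      = dot3 (dtV F t x) (G t x) + dot3 (F t x) (dtV G t x) := by
  simp only [dtS, dtV, dot3]
  rw [deriv_fun_sum fun i _ => (hF i).fun_mul (hG i), ← Finset.sum_add_distrib]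
  exact Finset.sum_congr rfl fun i _ => deriv_fun_mul (hF i) (hG i)

theorem dtV_grad3 (hf : SmoothTS f) (t : ℝ) (x : V3) :
    dtV (fun s => grad3 (f s)) t x = grad3 (dtS f t) x := by
  funext i
  exact deriv_fderiv_comm (φ := Function.uncurry f) (hf.of_le (WithTop.coe_le_coe.2 le_top)) t x _

end TimeDependent

def materialDeriv (f : ℝ → V3 → ℝ) (u : ℝ → V3 → V3) (t : ℝ) (x : V3) : ℝ :=
  dtS f t x + dot3 (u t x) (grad3 (f t) x)

def conservativeDeriv (f : ℝ → V3 → ℝ) (u : ℝ → V3 → V3) (t : ℝ) (x : V3) : ℝ :=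
  dtS f t x + div3 (fun y => f t y • u t y) x

section Transport

variable {f g S : ℝ → V3 → ℝ} {u B : ℝ → V3 → V3}

theorem conservativeDeriv_mul (hf : SmoothTS f) (hg : SmoothTS g) (hu : SmoothTV u)
    (t : ℝ) (x : V3) :
    conservativeDeriv (fun s y => f s y * g s y) u t x
      = g t x * materialDeriv f u t x + f t x * conservativeDeriv g u t x := by
  have hdiv : div3 (fun y => (f t y * g t y) • u t y) x
      = dot3 (g t x • u t x) (grad3 (f t) x) + f t x * div3 (fun y => g t y • u t y) x := by
    simp only [mul_smul]
    exact div3_smul (hf.differentiable_apply t x)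
      ((hg.differentiable_apply t x).smul (hu.differentiable_apply t x))
  rw [conservativeDeriv, conservativeDeriv, materialDeriv, hdiv,
    dtS_mul (hf.differentiable_time x t) (hg.differentiable_time x t),
    dot3_eq_dotProduct, smul_dotProduct, smul_eq_mul, dot3_eq_dotProduct]
  ring

theorem conservativeDeriv_dot3_grad3_eq_zero (hS : SmoothTS S) (hu : SmoothTV u)
    (hB : SmoothTV B) (t : ℝ) (x : V3) (hdivB : div3 (B t) x = 0)
    (hFar : dtV B t x = curl3 (fun y => cross3 (u t y) (B t y)) x)
    (hent : ∀ y, materialDeriv S u t y = 0) :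
    conservativeDeriv (fun s y => dot3 (B s y) (grad3 (S s) y)) u t x = 0 := by
  set w : V3 → ℝ := fun y => dot3 (u t y) (grad3 (S t) y) with hw
  have hu' := hu.differentiable_apply
  have hB' := hB.differentiable_apply
  have hS' := hS.grad3.differentiable_apply
  have hdt_grad : dtV (fun s => grad3 (S s)) t x = -grad3 w x := by
    have hdtS : dtS S t = fun y => -w y := funext fun y => eq_neg_of_add_eq_zero_left (hent y)
    rw [dtV_grad3 hS, hdtS]
    funext i
    exact pd_neg i
  have hfaraday : dot3 (dtV B t x) (grad3 (S t) x)
      = div3 (fun y => w y • B t y - dot3 (B t y) (grad3 (S t) y) • u t y) x := calc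
    _ = dot3 (grad3 (S t) x) (curl3 (fun y => cross3 (u t y) (B t y)) x)
        - dot3 (cross3 (u t x) (B t x)) (curl3 (grad3 (S t)) x) := by
      rw [hFar, curl3_grad3 ((hS.contDiff_apply t).of_le (WithTop.coe_le_coe.2 le_top)).contDiffAt]
      simp [dot3_eq_dotProduct, dotProduct_comm]
    _ = div3 (fun y => cross3 (cross3 (u t y) (B t y)) (grad3 (S t) y)) x :=
      (div3_cross3 (by fun_prop) (by fun_prop)).symm
    _ = div3 (fun y => w y • B t y - dot3 (B t y) (grad3 (S t) y) • u t y) x := by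
      simp only [cross3_eq_crossProduct, cross_cross_eq_smul_sub_smul, hw, dot3_eq_dotProduct]
  have hw' : DifferentiableAt ℝ w x := by fun_prop
  rw [conservativeDeriv,
    dtS_dot3 (hB.differentiable_time x · t) (hS.grad3.differentiable_time x · t), hfaraday,
    hdt_grad, div3_sub (by fun_prop) (by fun_prop), div3_smul hw' (hB' t x), hdivB, dot3_eq_dotProduct, dot3_eq_dotProduct, dotProduct_neg]
  ring

end Transport

section Momentum

variable {h : ℝ → V3 → ℝ} {Φ : V3 → ℝ} {u B : ℝ → V3 → V3}

theorem dtS_dot3_add_div3_eq_mul_dot3 (hh : SmoothTS h) (hΦ : SmoothS Φ) (hu : SmoothTV u)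
    (hB : SmoothTV B) (t : ℝ) (x : V3) (τ c : ℝ) (σ : V3) (hdivB : div3 (B t) x = 0)
    (hFar : dtV B t x = curl3 (fun y => cross3 (u t y) (B t y)) x)
    (hmom : dtV u t x - cross3 (u t x) (curl3 (u t) x)
        + grad3 (fun y => h t y + Φ y + (1/2) * dot3 (u t y) (u t y)) x
        - τ • σ - c • cross3 (curl3 (B t) x) (B t x) = 0) :
    dtS (fun s y => dot3 (B s y) (u s y)) t x
      + div3 (fun y => dot3 (B t y) (u t y) • u t y
          + (h t y + Φ y - (1/2) * dot3 (u t y) (u t y)) • B t y) x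
      = τ * dot3 (B t x) σ := by
  set e : V3 → ℝ := fun y => h t y + Φ y + (1/2) * dot3 (u t y) (u t y) with he
  have hh' := hh.differentiable_apply
  have hΦ' : Differentiable ℝ Φ := hΦ.differentiable (by simp)
  have hu' := hu.differentiable_apply
  have hB' := hB.differentiable_apply
  have he' : DifferentiableAt ℝ e x := by fun_prop
  have hflux : (fun y => dot3 (B t y) (u t y) • u t y
        + (h t y + Φ y - (1/2) * dot3 (u t y) (u t y)) • B t y)
      = fun y => e y • B t y - cross3 (cross3 (u t y) (B t y)) (u t y) := by
    funext y
    simp only [he, cross3_eq_crossProduct, cross_cross_eq_smul_sub_smul, dot3_eq_dotProduct]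
    module
  have hlorentz : dot3 (B t x) (dtV u t x) = dot3 (B t x) (cross3 (u t x) (curl3 (u t) x))
      - dot3 (B t x) (grad3 e x) + τ * dot3 (B t x) σ := by
    have := congrArg (dot3 (B t x)) hmom
    simp only [dot3_eq_dotProduct, dotProduct_sub, dotProduct_add, dotProduct_smul,
      cross3_eq_crossProduct, dot_cross_self, smul_eq_mul, mul_zero, dotProduct_zero] at this ⊢
    linarith
  have htriple : dot3 (cross3 (u t x) (B t x)) (curl3 (u t) x)
      = -dot3 (B t x) (cross3 (u t x) (curl3 (u t) x)) := by
    simp only [dot3_eq_dotProduct, cross3_eq_crossProduct]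
    rw [dotProduct_comm, ← cross_anticomm, dotProduct_neg, triple_product_permutation (B t x),
      triple_product_permutation (u t x)]
  rw [hflux, div3_sub (by fun_prop) (by fun_prop), div3_smul he' (hB' t x),
    div3_cross3 (by fun_prop) (hu' t x), hdivB,
    dtS_dot3 (hB.differentiable_time x · t) (hu.differentiable_time x · t), hFar, hlorentz,
    htriple]
  simp only [dot3_eq_dotProduct, dotProduct_comm (u t x)]
  ring

end Momentum

theorem generalized_cross_helicity_conservation_general
    (ρ S r T h : ℝ → V3 → ℝ) (Φ : V3 → ℝ) (u B : ℝ → V3 → V3) (μ₀ : ℝ)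
    (hS : SmoothTS S) (hr : SmoothTS r)
    (hh : SmoothTS h) (hΦ : SmoothS Φ) (hu : SmoothTV u) (hB : SmoothTV B)
    (hent : ∀ t x, dtS S t x + dot3 (u t x) (grad3 (S t) x) = 0)
    (hreq : ∀ t x, dtS r t x + dot3 (u t x) (grad3 (r t) x) = - T t x)
    (hdivB : ∀ t x, div3 (B t) x = 0)
    (hFar : ∀ t x, dtV B t x = curl3 (fun y => cross3 (u t y) (B t y)) x)
    (hmom : ∀ t x, dtV u t x - cross3 (u t x) (curl3 (u t) x)
        + grad3 (fun y => h t y + Φ y + (1/2) * dot3 (u t y) (u t y)) x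
        - T t x • grad3 (S t) x
        - (μ₀ * ρ t x)⁻¹ • cross3 (curl3 (B t) x) (B t x) = 0) :
    ∀ t x, dtS (fun s y => dot3 (B s y) (u s y + r s y • grad3 (S s) y)) t x
      + div3 (fun y => dot3 (B t y) (u t y + r t y • grad3 (S t) y) • u t y
          + (h t y + Φ y - (1/2) * dot3 (u t y) (u t y)) • B t y) x = 0 := by
  intro t x
  have hq : SmoothTS fun s y => dot3 (B s y) (grad3 (S s) y) := hB.dot3 hS.grad3
  have hBu := dtS_dot3_add_div3_eq_mul_dot3 hh hΦ hu hB t x _ _ _ (hdivB t x) (hFar t x) (hmom t x)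
  have hrq := conservativeDeriv_mul hr hq hu t x
  rw [conservativeDeriv_dot3_grad3_eq_zero hS hu hB t x (hdivB t x) (hFar t x) (hent t)] at hrq
  simp only [conservativeDeriv, materialDeriv, hreq t x] at hrq
  have hdens : (fun s y => dot3 (B s y) (u s y + r s y • grad3 (S s) y))
      = fun s y => dot3 (B s y) (u s y) + r s y * dot3 (B s y) (grad3 (S s) y) := by
    funext s y
    simp only [dot3_eq_dotProduct, dotProduct_add, dotProduct_smul, smul_eq_mul]
  have hflux : (fun y => dot3 (B t y) (u t y + r t y • grad3 (S t) y) • u t y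
        + (h t y + Φ y - (1/2) * dot3 (u t y) (u t y)) • B t y)
      = fun y => (dot3 (B t y) (u t y) • u t y
        + (h t y + Φ y - (1/2) * dot3 (u t y) (u t y)) • B t y)
        + (r t y * dot3 (B t y) (grad3 (S t) y)) • u t y := by
    funext y
    rw [congrFun₂ hdens t y, add_smul]
    abel
  have hu' := hu.differentiable_apply
  have hB' := hB.differentiable_apply
  have hh' := hh.differentiable_apply
  have hΦ' : Differentiable ℝ Φ := hΦ.differentiable (by simp)
  have hrq' := (hr.mul hq).differentiable_apply
  rw [hdens, hflux, dtS_add ((hB.dot3 hu).differentiable_time x t)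
      ((hr.mul hq).differentiable_time x t), div3_add (by fun_prop) (by fun_prop)]
  linear_combination hBu + hrq

theorem generalized_cross_helicity_conservation
    (ρ S r T h : ℝ → V3 → ℝ) (Φ : V3 → ℝ) (u B : ℝ → V3 → V3) (μ₀ : ℝ)
    (hρ : SmoothTS ρ) (hS : SmoothTS S) (hr : SmoothTS r) (hT : SmoothTS T)
    (hh : SmoothTS h) (hΦ : SmoothS Φ) (hu : SmoothTV u) (hB : SmoothTV B)
    (hμ₀ : 0 < μ₀) (hρpos : ∀ t x, 0 < ρ t x)
    (hcont : ∀ t x, dtS ρ t x + div3 (fun y => ρ t y • u t y) x = 0)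
    (hent : ∀ t x, dtS S t x + dot3 (u t x) (grad3 (S t) x) = 0)
    (hreq : ∀ t x, dtS r t x + dot3 (u t x) (grad3 (r t) x) = - T t x)
    (hdivB : ∀ t x, div3 (B t) x = 0)
    (hFar : ∀ t x, dtV B t x = curl3 (fun y => cross3 (u t y) (B t y)) x)
    (hmom : ∀ t x, dtV u t x - cross3 (u t x) (curl3 (u t) x)
        + grad3 (fun y => h t y + Φ y + (1/2) * dot3 (u t y) (u t y)) x
        - T t x • grad3 (S t) x
        - (μ₀ * ρ t x)⁻¹ • cross3 (curl3 (B t) x) (B t x) = 0) :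
    ∀ t x, dtS (fun s y => dot3 (B s y) (u s y + r s y • grad3 (S s) y)) t x
      + div3 (fun y => dot3 (B t y) (u t y + r t y • grad3 (S t) y) • u t y
          + (h t y + Φ y - (1/2) * dot3 (u t y) (u t y)) • B t y) x = 0 :=
  generalized_cross_helicity_conservation_general ρ S r T h Φ u B μ₀ hS hr hh hΦ hu hB hent hreq
    hdivB hFar hmom

end
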